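/- Let (X, H, μ) be an abstract Wiener space, u ∈ L²(X, μ; H) with Iu = αₙ where αₙ = α^{(n)} ∘ P_n is σ(P_n)-measurable. Define w: ℝⁿ → ℝⁿ by w_i(P_n x) = E_μ[(u, e_i)_H | P_n](x), i = 1,…,n. Then, in L²(ℝⁿ, μ^{(n)}), I w = α^{(n)}, i.e., ∫ (∇g, w) dμ^{(n)} = ∫ g α^{(n)} dμ^{(n)} for all smooth bounded g on ℝⁿ. -/

import Mathlib

open MeasureTheory Real ENNReal

/-- Cameron–Martin cost `d_H(x,y) = |x-y|_H` (`∞` if `x-y` is not in the range of `ι`). -/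
noncomputable def dH {X H : Type*} [NormedAddCommGroup X] [NormedSpace ℝ X]
    [NormedAddCommGroup H] [InnerProductSpace ℝ H] (ι : H →L[ℝ] X) (x y : X) : ℝ≥0∞ :=
  ⨅ (h : H) (_ : ι h = x - y), ENNReal.ofReal ‖h‖

/-- Kantorovich–Rubinstein distance on `X` with Cameron–Martin cost. -/
noncomputable def W1H {X H : Type*} [NormedAddCommGroup X] [NormedSpace ℝ X]
    [NormedAddCommGroup H] [InnerProductSpace ℝ H] [MeasurableSpace X]
    (iota : H →L[ℝ] X) (nu0 nu1 : Measure X) : ℝ≥0∞ :=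
  ⨅ (c : Measure (X × X)) (_ : c.map Prod.fst = nu0 ∧ c.map Prod.snd = nu1),
    ∫⁻ p, dH iota p.1 p.2 ∂c

/-- `(X, H, μ)` is an abstract Wiener space (with embedding `ι : H → X`). -/
structure IsAWS {X H : Type*} [NormedAddCommGroup X] [NormedSpace ℝ X]
    [NormedAddCommGroup H] [InnerProductSpace ℝ H] [MeasurableSpace X]
    (iota : H →L[ℝ] X) (mu : Measure X) : Prop where
  isProb : IsProbabilityMeasure mu
  inj : Function.Injective iota
  dense : DenseRange iota
  gauss : ∀ L : X →L[ℝ] ℝ, mu.map L = ProbabilityTheory.gaussianReal 0 (‖L.comp iota‖₊ ^ 2)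
  full : ∀ U : Set X, IsOpen U → U.Nonempty → 0 < mu U

/-- Weak formulation of `I u = α` on the abstract Wiener space: integration by parts
against smooth cylindrical functions `φ(ℓ₁(x),…,ℓ_d(x))`, where `h i ∈ H` represents
`ℓ i` restricted to `H`. -/
def IsDivW {X H : Type*} [NormedAddCommGroup X] [NormedSpace ℝ X]
    [NormedAddCommGroup H] [InnerProductSpace ℝ H] [MeasurableSpace X]
    (iota : H →L[ℝ] X) (mu : Measure X) (u : X → H) (a : X → ℝ) : Prop :=
  ∀ (d : ℕ) (φ : (Fin d → ℝ) → ℝ), ContDiff ℝ (⊤ : ℕ∞) φ →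
    (∀ k : ℕ, ∃ C, ∀ y, ‖iteratedFDeriv ℝ k φ y‖ ≤ C) →
    ∀ (L : Fin d → (X →L[ℝ] ℝ)) (h : Fin d → H),
      (∀ i v, L i (iota v) = (inner ℝ (h i) v : ℝ)) →
      ∫ x, ∑ i, fderiv ℝ φ (fun j => L j x) (Pi.single i 1) * (inner ℝ (u x) (h i) : ℝ) ∂mu
        = ∫ x, a x * φ (fun j => L j x) ∂mu


noncomputable def stdG (n : ℕ) : Measure (Fin n → ℝ) :=
  Measure.pi fun _ => ProbabilityTheory.gaussianReal 0 1

/-- Euclidean norm on `Fin n → ℝ`. -/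
noncomputable def eN {n : ℕ} (v : Fin n → ℝ) : ℝ := Real.sqrt (∑ i, v i ^ 2)

/-- Ornstein–Uhlenbeck (Mehler) semigroup acting on functions. -/
noncomputable def ouF (n : ℕ) (t : ℝ) (f : (Fin n → ℝ) → ℝ) (x : Fin n → ℝ) : ℝ :=
  ∫ y, f (fun i => Real.exp (-t) * x i + Real.sqrt (1 - Real.exp (-2*t)) * y i) ∂ stdG n

/-- Ornstein–Uhlenbeck semigroup acting on measures. -/
noncomputable def ouM (n : ℕ) (t : ℝ) (ν : Measure (Fin n → ℝ)) : Measure (Fin n → ℝ) :=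
  (ν.prod (stdG n)).map
    (fun p => fun i => Real.exp (-t) * p.1 i + Real.sqrt (1 - Real.exp (-2*t)) * p.2 i)

/-- `IsDiv n u α` : the Gaussian divergence of the vector field `u` is `α`, in the weak
(integration by parts) sense against smooth cylindrical test functions. -/
def IsDiv (n : ℕ) (u : (Fin n → ℝ) → (Fin n → ℝ)) (α : (Fin n → ℝ) → ℝ) : Prop :=
  ∀ f : (Fin n → ℝ) → ℝ, ContDiff ℝ (⊤ : ℕ∞) f →
    (∀ k : ℕ, ∃ C, ∀ x, ‖iteratedFDeriv ℝ k f x‖ ≤ C) →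
    ∫ x, ∑ i, u x i * fderiv ℝ f x (Pi.single i 1) ∂ stdG n
      = ∫ x, α x * f x ∂ stdG n

/-- Kantorovich–Rubinstein (Wasserstein-1) distance w.r.t. the Euclidean norm. -/
noncomputable def W1 (n : ℕ) (ν₀ ν₁ : Measure (Fin n → ℝ)) : ℝ≥0∞ :=
  ⨅ (c : Measure ((Fin n → ℝ) × (Fin n → ℝ)))
    (_ : c.map Prod.fst = ν₀ ∧ c.map Prod.snd = ν₁),
      ∫⁻ p, ENNReal.ofReal (eN (p.1 - p.2)) ∂c



set_option maxHeartbeats 1000000 in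
lemma factor_ae {X : Type*} [MeasurableSpace X] [StandardBorelSpace X] [Nonempty X]
    {n : ℕ} (μ : Measure X) [IsProbabilityMeasure μ]
    (T : X → (Fin n → ℝ)) (hT : Measurable T)
    (g : (Fin n → ℝ) → ℝ) (h : X → ℝ) (hh : AEStronglyMeasurable h μ)
    (hgh : (fun x => g (T x)) =ᵐ[μ] h) :
    ∃ G : (Fin n → ℝ) → ℝ, StronglyMeasurable G ∧ g =ᵐ[μ.map T] G ∧
      h =ᵐ[μ] fun x => G (T x) := by
  have hTm : Measurable fun x => (T x, x) := hT.prodMk measurable_id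
  set ν : Measure ((Fin n → ℝ) × X) := μ.map (fun x => (T x, x)) with hν
  haveI : IsProbabilityMeasure ν := Measure.isProbabilityMeasure_map hTm.aemeasurable
  have hfst : ν.fst = μ.map T := by
    rw [Measure.fst, hν, Measure.map_map measurable_fst hTm]
    rfl
  obtain ⟨h₀, h₀m, hhh₀⟩ := hh
  have hM : ∀ᵐ x ∂μ, g (T x) = h₀ x := hgh.trans hhh₀
  set M := toMeasurable μ {x | ¬ g (T x) = h₀ x} with hMdef
  have hMmeas : MeasurableSet M := measurableSet_toMeasurable _ _
  have hMnull : μ M = 0 := by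
    rw [hMdef, measure_toMeasurable, ← ae_iff]; exact hM
  have hν1 : ∀ᵐ p ∂ν, T p.2 = p.1 ∧ p.2 ∉ M := by
    rw [hν, ae_map_iff hTm.aemeasurable]
    · have : ∀ᵐ x ∂μ, x ∉ M := by
        rw [ae_iff]; simpa using hMnull
      filter_upwards [this] with x hx
      exact ⟨rfl, hx⟩
    · exact (measurableSet_eq_fun (hT.comp measurable_snd) measurable_fst).inter
        (hMmeas.preimage measurable_snd).compl
  have hκ : ∀ᵐ y ∂ν.fst, ∀ᵐ x ∂ν.condKernel y, T x = y ∧ x ∉ M :=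
    Measure.ae_ae_of_ae_compProd (μ := ν.fst) (κ := ν.condKernel)
      (p := fun p => T p.2 = p.1 ∧ p.2 ∉ M)
      (by rw [ν.disintegrate ν.condKernel]; exact hν1)
  set G : (Fin n → ℝ) → ℝ := fun y => ∫ x, h₀ x ∂(ν.condKernel y) with hGdef
  have hGm : StronglyMeasurable G := by
    exact (h₀m.comp_measurable measurable_snd).integral_kernel_prod_right'
  have hg : g =ᵐ[ν.fst] G := by
    filter_upwards [hκ] with y hy
    haveI : IsProbabilityMeasure (ν.condKernel y) := inferInstance
    have h1 : ∀ᵐ x ∂ν.condKernel y, h₀ x = g y := by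
      filter_upwards [hy] with x hx
      obtain ⟨hx1, hx2⟩ := hx
      have hgx : g (T x) = h₀ x := by
        by_contra hc
        exact hx2 (subset_toMeasurable _ _ hc)
      rw [← hgx, hx1]
    calc g y = ∫ _, g y ∂ν.condKernel y := by simp
    _ = ∫ x, h₀ x ∂ν.condKernel y := (integral_congr_ae h1).symm
  rw [hfst] at hg
  have hTae : ∀ᵐ x ∂μ, g (T x) = G (T x) := ae_of_ae_map hT.aemeasurable hg
  exact ⟨G, hGm, hg, hgh.symm.trans hTae⟩

set_option maxHeartbeats 1000000 in
lemma map_integral_eq {X : Type*} [MeasurableSpace X] [StandardBorelSpace X] [Nonempty X]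
    {n : ℕ} (μ : Measure X) [IsProbabilityMeasure μ]
    (T : X → (Fin n → ℝ)) (hT : Measurable T) (g : (Fin n → ℝ) → ℝ) :
    ∫ x, g (T x) ∂μ = ∫ y, g y ∂(μ.map T) := by
  by_cases hm : AEStronglyMeasurable (fun x => g (T x)) μ
  · obtain ⟨G, hGm, hGg, hGT⟩ := factor_ae μ T hT g (fun x => g (T x)) hm (ae_eq_refl _)
    rw [integral_congr_ae hGT, integral_congr_ae hGg,
      integral_map hT.aemeasurable hGm.aestronglyMeasurable]
  · rw [integral_non_aestronglyMeasurable hm, integral_non_aestronglyMeasurable]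
    intro hc
    exact hm (hc.comp_aemeasurable hT.aemeasurable)

set_option maxHeartbeats 2000000 in
theorem projected_divergence {X H : Type*} [NormedAddCommGroup X] [NormedSpace ℝ X] [CompleteSpace X]
    [SecondCountableTopology X] [MeasurableSpace X] [BorelSpace X]
    [NormedAddCommGroup H] [InnerProductSpace ℝ H] [CompleteSpace H]
    (iota : H →L[ℝ] X) (mu : Measure X) (hAWS : IsAWS iota mu)
    (b : HilbertBasis ℕ ℝ H) (L : ℕ → (X →L[ℝ] ℝ))
    (hbL : ∀ i v, L i (iota v) = (inner ℝ (b i) v : ℝ))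
    (n : ℕ)
    (hproj : mu.map (fun x => fun i : Fin n => L i x) = stdG n)
    (an : (Fin n → ℝ) → ℝ)
    (u : X → H) (hu : MemLp u 2 mu)
    (hdiv : IsDivW iota mu u (fun x => an (fun i : Fin n => L i x)))
    (w : (Fin n → ℝ) → (Fin n → ℝ))
    (hw : ∀ i : Fin n, (fun x => w (fun j : Fin n => L j x) i)
      =ᵐ[mu] mu[(fun x => (inner ℝ (u x) (b (i : ℕ)) : ℝ)) |
        MeasurableSpace.comap (fun x => fun j : Fin n => L j x) inferInstance]) :
    IsDiv n w an := by
  classical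
  haveI : Nonempty X := ⟨0⟩
  haveI : IsProbabilityMeasure mu := hAWS.isProb
  haveI : StandardBorelSpace X := ⟨⟨inferInstance, inferInstance, inferInstance⟩⟩
  intro f hf hfb
  set T : X → (Fin n → ℝ) := fun x => fun i : Fin n => L i x with hTdef
  have hTmeas : Measurable T :=
    measurable_pi_lambda _ fun i => (L (i : ℕ)).continuous.measurable
  -- derivative of f
  have hfd : Continuous (fderiv ℝ f) := (hf.fderiv_right (m := (⊤ : ℕ∞)) (by simp)).continuous
  have hDc : ∀ i : Fin n, Continuous fun y => fderiv ℝ f y (Pi.single i 1) :=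
    fun i => hfd.clm_apply continuous_const
  obtain ⟨C, hC⟩ := hfb 1
  have hDb : ∀ (i : Fin n) y, ‖fderiv ℝ f y (Pi.single i (1:ℝ))‖ ≤ C := by
    intro i y
    have h1 : fderiv ℝ f y (Pi.single i 1)
        = iteratedFDeriv ℝ 1 f y (fun _ => Pi.single i 1) := by
      rw [iteratedFDeriv_one_apply]
    have h3 := (iteratedFDeriv ℝ 1 f y).le_opNorm
      (fun _ : Fin 1 => (Pi.single i 1 : Fin n → ℝ))
    simp only [Finset.prod_const, Finset.card_univ, Fintype.card_fin, pow_one,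
      Pi.norm_single, norm_one, mul_one] at h3
    rw [h1]
    exact h3.trans (hC y)
  -- the sigma-algebra generated by T
  have hle : MeasurableSpace.comap T inferInstance ≤ _ := hTmeas.comap_le
  -- the coordinates of u
  set gI : Fin n → X → ℝ := fun i x => (inner ℝ (u x) (b (i : ℕ)) : ℝ) with hgIdef
  have hgIint : ∀ i, Integrable (gI i) mu := by
    intro i
    have h2 : MemLp (gI i) 2 mu := hu.inner_const (b (i : ℕ))
    exact h2.integrable one_le_two
  set cI : Fin n → X → ℝ := fun i => mu[gI i | MeasurableSpace.comap T inferInstance] with hcIdef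
  have hcSM : ∀ i : Fin n, AEStronglyMeasurable (cI i) mu :=
    fun i => (stronglyMeasurable_condExp.mono hle).aestronglyMeasurable
  -- measurable versions of w
  choose G hGm hGw hGc using fun i : Fin n =>
    factor_ae mu T hTmeas (fun y => w y i) (cI i) (hcSM i) (hw i)
  rw [hproj] at hGw
  -- integrability facts
  have hDint : ∀ i : Fin n, Integrable (fun x => fderiv ℝ f (T x) (Pi.single i 1) * cI i x) mu := by
    intro i
    exact (integrable_condExp).bdd_mul
      (((hDc i).stronglyMeasurable.comp_measurable hTmeas).aestronglyMeasurable)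
      (ae_of_all _ fun x => hDb i (T x))
  have hDint' : ∀ i : Fin n, Integrable (fun x => fderiv ℝ f (T x) (Pi.single i 1) * gI i x) mu := by
    intro i
    exact (hgIint i).bdd_mul
      (((hDc i).stronglyMeasurable.comp_measurable hTmeas).aestronglyMeasurable)
      (ae_of_all _ fun x => hDb i (T x))
  -- pull-out property of conditional expectation
  have key : ∀ i : Fin n, ∫ x, fderiv ℝ f (T x) (Pi.single i 1) * cI i x ∂mu
      = ∫ x, fderiv ℝ f (T x) (Pi.single i 1) * gI i x ∂mu := by
    intro i
    set ψ : X → ℝ := fun x => fderiv ℝ f (T x) (Pi.single i 1) with hψdef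
    have hTm' : Measurable[MeasurableSpace.comap T inferInstance] T := Measurable.of_comap_le le_rfl
    have hψm : StronglyMeasurable[MeasurableSpace.comap T inferInstance] ψ :=
      (hDc i).stronglyMeasurable.comp_measurable hTm'
    have hψg : Integrable (ψ * gI i) mu := hDint' i
    have hpull : mu[ψ * gI i | MeasurableSpace.comap T inferInstance] =ᵐ[mu] ψ * mu[gI i | MeasurableSpace.comap T inferInstance] :=
      condExp_mul_of_stronglyMeasurable_left hψm hψg (hgIint i)
    calc ∫ x, ψ x * cI i x ∂mu = ∫ x, (ψ * mu[gI i | MeasurableSpace.comap T inferInstance]) x ∂mu := rfl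
      _ = ∫ x, (mu[ψ * gI i | MeasurableSpace.comap T inferInstance]) x ∂mu := (integral_congr_ae hpull).symm
      _ = ∫ x, (ψ * gI i) x ∂mu := integral_condExp hle
      _ = ∫ x, ψ x * gI i x ∂mu := rfl
  -- main chain of equalities
  calc ∫ y, ∑ i, w y i * fderiv ℝ f y (Pi.single i 1) ∂stdG n
      = ∫ y, ∑ i, G i y * fderiv ℝ f y (Pi.single i 1) ∂stdG n := by
        apply integral_congr_ae
        have hall : ∀ᵐ y ∂stdG n, ∀ i : Fin n, w y i = G i y :=
          Filter.eventually_all.mpr fun i => hGw i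
        filter_upwards [hall] with y hy
        simp only [hy]
    _ = ∫ x, ∑ i, G i (T x) * fderiv ℝ f (T x) (Pi.single i 1) ∂mu := by
        rw [← hproj]
        refine integral_map hTmeas.aemeasurable ?_
        refine (Finset.stronglyMeasurable_fun_sum _ fun i _ => ?_).aestronglyMeasurable
        exact (hGm i).mul (hDc i).stronglyMeasurable
    _ = ∫ x, ∑ i, fderiv ℝ f (T x) (Pi.single i 1) * cI i x ∂mu := by
        apply integral_congr_ae
        have hall : ∀ᵐ x ∂mu, ∀ i : Fin n, cI i x = G i (T x) :=
          Filter.eventually_all.mpr fun i => hGc i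
        filter_upwards [hall] with x hx
        refine Finset.sum_congr rfl fun i _ => ?_
        rw [hx i, mul_comm]
    _ = ∑ i, ∫ x, fderiv ℝ f (T x) (Pi.single i 1) * cI i x ∂mu :=
        integral_finset_sum _ fun i _ => hDint i
    _ = ∑ i, ∫ x, fderiv ℝ f (T x) (Pi.single i 1) * gI i x ∂mu :=
        Finset.sum_congr rfl fun i _ => key i
    _ = ∫ x, ∑ i, fderiv ℝ f (T x) (Pi.single i 1) * gI i x ∂mu :=
        (integral_finset_sum _ fun i _ => hDint' i).symm
    _ = ∫ x, an (T x) * f (T x) ∂mu := by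
        exact hdiv n f hf hfb (fun i : Fin n => L (i : ℕ)) (fun i : Fin n => b (i : ℕ))
          (fun i v => hbL (i : ℕ) v)
    _ = ∫ y, an y * f y ∂stdG n := by
        have h3 := map_integral_eq mu T hTmeas (fun y => an y * f y)
        rw [hproj] at h3
        exact h3
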